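/- For discrete random variables Z, G, G*, Y with Z = f(G*), one has I(Z;G) − I(G;G*) ≤ I(Z;Y); hence maximizing I(Z;G) while minimizing I(G;G*) yields a lower bound on I(Z;Y). -/

import Mathlib

/-!
`Z = f(G*)` is a function of `G*`, so grouping the terms of `I(G;G*)` along the fibres of `f` and
applying the log-sum inequality to each group gives the data-processing inequality
`I(Z;G) ≤ I(G;G*)`; and `I(Z;Y) ≥ 0` by Gibbs' inequality.
-/

open Finset

variable {α β γ : Type*} [Fintype α] [Fintype β] [Fintype γ]

noncomputable def m1 (p : α → β → γ → ℝ) (a : α) : ℝ := ∑ b, ∑ c, p a b c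
noncomputable def m2 (p : α → β → γ → ℝ) (b : β) : ℝ := ∑ a, ∑ c, p a b c
noncomputable def m3 (p : α → β → γ → ℝ) (c : γ) : ℝ := ∑ a, ∑ b, p a b c
noncomputable def m12 (p : α → β → γ → ℝ) (a : α) (b : β) : ℝ := ∑ c, p a b c
noncomputable def m13 (p : α → β → γ → ℝ) (a : α) (c : γ) : ℝ := ∑ b, p a b c
noncomputable def m23 (p : α → β → γ → ℝ) (b : β) (c : γ) : ℝ := ∑ a, p a b c

/-- Mutual information between the first and second variables. -/
noncomputable def mi12 (p : α → β → γ → ℝ) : ℝ :=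
  ∑ a, ∑ b, m12 p a b * Real.log (m12 p a b / (m1 p a * m2 p b))

/-- Mutual information between the first and third variables. -/
noncomputable def mi13 (p : α → β → γ → ℝ) : ℝ :=
  ∑ a, ∑ c, m13 p a c * Real.log (m13 p a c / (m1 p a * m3 p c))

/-- Conditional mutual information between the first and second variables given the third. -/
noncomputable def cmi12_3 (p : α → β → γ → ℝ) : ℝ :=
  ∑ a, ∑ b, ∑ c, p a b c * Real.log (p a b c * m3 p c / (m13 p a c * m23 p b c))

/-- Conditional mutual information between the first and third variables given the second. -/
noncomputable def cmi13_2 (p : α → β → γ → ℝ) : ℝ :=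
  ∑ a, ∑ b, ∑ c, p a b c * Real.log (p a b c * m2 p b / (m12 p a b * m23 p b c))

variable {ζ : Type*} [Fintype ζ] [DecidableEq ζ]

/-- Marginal pmf of `Z = f(G*)`, where the joint pmf `p` is over `(G, G*, Y)`. -/
noncomputable def pZ (p : α → β → γ → ℝ) (f : β → ζ) (z : ζ) : ℝ :=
  ∑ g, ∑ s, ∑ y, if f s = z then p g s y else 0

/-- Joint pmf of `(Z, G)` where `Z = f(G*)`. -/
noncomputable def pZG (p : α → β → γ → ℝ) (f : β → ζ) (z : ζ) (g : α) : ℝ :=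
  ∑ s, ∑ y, if f s = z then p g s y else 0

/-- Joint pmf of `(Z, Y)` where `Z = f(G*)`. -/
noncomputable def pZY (p : α → β → γ → ℝ) (f : β → ζ) (z : ζ) (y : γ) : ℝ :=
  ∑ g, ∑ s, if f s = z then p g s y else 0

/-- Mutual information `I(Z;G)` where `Z = f(G*)`. -/
noncomputable def miZG (p : α → β → γ → ℝ) (f : β → ζ) : ℝ :=
  ∑ z, ∑ g, pZG p f z g * Real.log (pZG p f z g / (pZ p f z * m1 p g))

/-- Mutual information `I(Z;Y)` where `Z = f(G*)`. -/
noncomputable def miZY (p : α → β → γ → ℝ) (f : β → ζ) : ℝ :=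
  ∑ z, ∑ y, pZY p f z y * Real.log (pZY p f z y / (pZ p f z * m3 p y))

open Real InformationTheory

theorem sub_le_mul_log_div {a b : ℝ} (ha : 0 ≤ a) (hb : 0 ≤ b) (hab : b = 0 → a = 0) :
    a - b ≤ a * log (a / b) := by
  rcases hb.eq_or_lt with rfl | hb
  · simp [hab rfl]
  · have hkl := mul_nonneg hb.le (klFun_nonneg (div_nonneg ha hb.le))
    have hkl_eq : b * klFun (a / b) = a * log (a / b) + b - a := by
      rw [klFun_apply]
      field_simp
    linarith

section LogSum

variable {ι : Type*} {s : Finset ι} {a b : ι → ℝ}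

theorem sum_sub_sum_le_sum_mul_log_div (ha : ∀ i ∈ s, 0 ≤ a i) (hb : ∀ i ∈ s, 0 ≤ b i)
    (hab : ∀ i ∈ s, b i = 0 → a i = 0) :
    ∑ i ∈ s, a i - ∑ i ∈ s, b i ≤ ∑ i ∈ s, a i * log (a i / b i) := by
  rw [← sum_sub_distrib]
  exact sum_le_sum fun i hi => sub_le_mul_log_div (ha i hi) (hb i hi) (hab i hi)

theorem sum_mul_log_div_sum_le_sum_mul_log_div (ha : ∀ i ∈ s, 0 ≤ a i)
    (hb : ∀ i ∈ s, 0 ≤ b i) (hab : ∀ i ∈ s, b i = 0 → a i = 0) :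
    (∑ i ∈ s, a i) * log ((∑ i ∈ s, a i) / ∑ i ∈ s, b i) ≤
      ∑ i ∈ s, a i * log (a i / b i) := by
  set A := ∑ i ∈ s, a i with hA_def
  set B := ∑ i ∈ s, b i with hB_def
  rcases (sum_nonneg ha : 0 ≤ A).eq_or_lt with hA | hA
  · have ha0 := (sum_eq_zero_iff_of_nonneg ha).1 hA.symm
    rw [hA_def, ← hA, zero_mul, sum_eq_zero fun i hi => by rw [ha0 i hi, zero_mul]]
  have hB : 0 < B := (sum_nonneg hb).lt_of_ne fun hB => hA.ne' <|
    sum_eq_zero fun i hi => hab i hi ((sum_eq_zero_iff_of_nonneg hb).1 hB.symm i hi)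
  have hAB : 0 < A / B := div_pos hA hB
  -- Gibbs' inequality against `b` rescaled to the total mass of `a`
  have key := sum_sub_sum_le_sum_mul_log_div (b := fun i => b i * (A / B)) ha
    (fun i hi => mul_nonneg (hb i hi) hAB.le)
    (fun i hi h => hab i hi ((mul_eq_zero.1 h).resolve_right hAB.ne'))
  have hmass : ∑ i ∈ s, b i * (A / B) = A := by rw [← sum_mul, ← hB_def]; field_simp
  have hterm : ∀ i ∈ s, a i * log (a i / (b i * (A / B))) =
      a i * log (a i / b i) - a i * log (A / B) := by
    intro i hi
    rcases eq_or_ne (a i) 0 with h | h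
    · simp [h]
    rw [← div_div, log_div (div_ne_zero h fun h' => h (hab i hi h')) hAB.ne']
    ring
  rw [hmass, sub_self, sum_congr rfl hterm, sum_sub_distrib, ← sum_mul] at key
  linarith

end LogSum

noncomputable def mutualInfo (q : α → β → ℝ) : ℝ :=
  ∑ a, ∑ b, q a b * log (q a b / ((∑ b', q a b') * ∑ a', q a' b))

section MutualInfo

variable {q : α → β → ℝ}

theorem mutualInfo_swap (q : α → β → ℝ) : mutualInfo (fun b a => q a b) = mutualInfo q := by
  rw [mutualInfo, sum_comm]
  exact sum_congr rfl fun a _ => sum_congr rfl fun b _ => by rw [mul_comm (∑ a', q a' b)]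

theorem marginal_mul_marginal_nonneg (hq : ∀ a b, 0 ≤ q a b) (a : α) (b : β) :
    0 ≤ (∑ b', q a b') * ∑ a', q a' b :=
  mul_nonneg (sum_nonneg fun _ _ => hq _ _) (sum_nonneg fun _ _ => hq _ _)

theorem eq_zero_of_marginal_mul_marginal_eq_zero (hq : ∀ a b, 0 ≤ q a b) {a : α} {b : β}
    (h : (∑ b', q a b') * ∑ a', q a' b = 0) : q a b = 0 := by
  rcases mul_eq_zero.1 h with h | h
  · exact (sum_eq_zero_iff_of_nonneg fun _ _ => hq _ _).1 h b (mem_univ _)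
  · exact (sum_eq_zero_iff_of_nonneg fun _ _ => hq _ _).1 h a (mem_univ _)

theorem mutualInfo_nonneg (hq : ∀ a b, 0 ≤ q a b) (h1 : ∑ a, ∑ b, q a b = 1) :
    0 ≤ mutualInfo q := by
  have h1' : ∑ b, ∑ a, q a b = 1 := sum_comm.trans h1
  calc (0 : ℝ) = ∑ a, (∑ b, q a b - ∑ b, (∑ b', q a b') * ∑ a', q a' b) := by
        simp only [← mul_sum, h1', mul_one, sub_self, sum_const_zero]
    _ ≤ mutualInfo q := sum_le_sum fun a _ =>
        sum_sub_sum_le_sum_mul_log_div (fun b _ => hq a b)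
          (fun b _ => marginal_mul_marginal_nonneg hq a b)
          (fun b _ => eq_zero_of_marginal_mul_marginal_eq_zero hq)

theorem mutualInfo_map_snd_le (hq : ∀ a b, 0 ≤ q a b) (f : β → ζ) :
    mutualInfo (fun a z => ∑ b with f b = z, q a b) ≤ mutualInfo q := by
  have hrow : ∀ a, ∑ z, ∑ b with f b = z, q a b = ∑ b, q a b := fun a => sum_fiberwise _ _ _
  have hcol : ∀ z, ∑ a, ∑ b with f b = z, q a b = ∑ b with f b = z, ∑ a, q a b :=
    fun z => sum_comm
  calc mutualInfo (fun a z => ∑ b with f b = z, q a b)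
      = ∑ a, ∑ z, (∑ b with f b = z, q a b) * log ((∑ b with f b = z, q a b) /
          ∑ b with f b = z, (∑ b', q a b') * ∑ a', q a' b) := by
        simp only [mutualInfo, hrow, hcol, ← mul_sum]
    _ ≤ ∑ a, ∑ z, ∑ b with f b = z, q a b * log (q a b / ((∑ b', q a b') * ∑ a', q a' b)) :=
        sum_le_sum fun a _ => sum_le_sum fun z _ =>
          sum_mul_log_div_sum_le_sum_mul_log_div (fun b _ => hq a b)
            (fun b _ => marginal_mul_marginal_nonneg hq a b)
            (fun b _ => eq_zero_of_marginal_mul_marginal_eq_zero hq)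
    _ = mutualInfo q := sum_congr rfl fun a _ => sum_fiberwise _ _ _

end MutualInfo

theorem miZG_le_mi12 (p : α → β → γ → ℝ) (f : β → ζ) (hp : ∀ g s y, 0 ≤ p g s y) :
    miZG p f ≤ mi12 p := by
  have hm12 : ∀ g s, 0 ≤ m12 p g s := fun g s => sum_nonneg fun y _ => hp g s y
  have hpZG : ∀ z g, pZG p f z g = ∑ s with f s = z, m12 p g s := fun z g => by
    simp only [pZG, m12, sum_filter, sum_ite_irrel, sum_const_zero]
  have hm1 : ∀ g, m1 p g = ∑ z, pZG p f z g := fun g => by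
    simp only [hpZG, sum_fiberwise]
    rfl
  calc miZG p f = mutualInfo (pZG p f) := by
        simp only [miZG, mutualInfo, ← hm1]
        rfl
    _ = mutualInfo (fun g z => pZG p f z g) := (mutualInfo_swap _).symm
    _ = mutualInfo (fun g z => ∑ s with f s = z, m12 p g s) := by simp only [hpZG]
    _ ≤ mutualInfo (m12 p) := mutualInfo_map_snd_le hm12 f
    _ = mi12 p := rfl

theorem miZY_nonneg (p : α → β → γ → ℝ) (f : β → ζ) (hp : ∀ g s y, 0 ≤ p g s y)
    (hsum : ∑ g, ∑ s, ∑ y, p g s y = 1) : 0 ≤ miZY p f := by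
  have hpZY : ∀ z y, pZY p f z y = ∑ s with f s = z, m23 p s y := fun z y => by
    rw [pZY, sum_comm]
    simp only [m23, sum_filter, sum_ite_irrel, sum_const_zero]
  have hm3 : ∀ y, m3 p y = ∑ z, pZY p f z y := fun y => by
    simp only [hpZY, sum_fiberwise, m23, m3]
    exact sum_comm
  have hpZ : ∀ z, pZ p f z = ∑ y, pZY p f z y := fun z => by
    simp only [pZY, pZ]
    symm
    rw [sum_comm]
    exact sum_congr rfl fun g _ => sum_comm
  have hZY : miZY p f = mutualInfo (pZY p f) := by
    simp only [miZY, mutualInfo, hm3, hpZ]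
  rw [hZY]
  refine mutualInfo_nonneg (fun z y => ?_) ?_
  · rw [hpZY]
    exact sum_nonneg fun s _ => sum_nonneg fun g _ => hp g s y
  · rw [sum_comm]
    simp only [← hm3, m3]
    rw [← hsum, sum_comm]
    exact sum_congr rfl fun g _ => sum_comm

/-- For discrete random variables `G, G*, Y` with joint pmf `p` (roles: G = first,
G* = second, Y = third) and `Z = f(G*)`, `I(Z;G) − I(G;G*) ≤ I(Z;Y)`; hence
maximizing `I(Z;G)` while minimizing `I(G;G*)` yields a lower bound on `I(Z;Y)`. -/
theorem stmt11 (p : α → β → γ → ℝ) (f : β → ζ)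
    (hp : ∀ g s y, 0 ≤ p g s y) (hsum : ∑ g, ∑ s, ∑ y, p g s y = 1) :
    miZG p f - mi12 p ≤ miZY p f := by
  linarith [miZG_le_mi12 p f hp, miZY_nonneg p f hp hsum]
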